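/- arXiv:2301.08233 — 2 statements merged into one kernel-verified Lean document; each statement's English description precedes it below -/
import Mathlib

section
/- For every infinite cardinal λ there exist infinite cardinals μ and θ with μ^{<θ} = μ < λ⁺ ≤ μ^θ; consequently λ⁺ is not λ⁺-square compact. -/
universe u

/-- `κ`-compactness: every open cover has a subcover of cardinality less than `κ`. -/
def KCompact (κ : Cardinal.{u}) {X : Type u} (t : TopologicalSpace X) : Prop :=
  ∀ 𝒰 : Set (Set X), (∀ U ∈ 𝒰, t.IsOpen U) → ⋃₀ 𝒰 = Set.univ →
    ∃ 𝒰₀ ⊆ 𝒰, Cardinal.mk 𝒰₀ < κ ∧ ⋃₀ 𝒰₀ = Set.univ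

/-- The weight of a topological space: the least cardinality of a base. -/
noncomputable def tweight {X : Type u} (t : TopologicalSpace X) : Cardinal.{u} :=
  sInf {c | ∃ B : Set (Set X), @TopologicalSpace.IsTopologicalBasis X t B ∧ Cardinal.mk B = c}

/-- `κ` is `κ`-square compact: for every space of weight at most `κ`, if it is
`κ`-compact then its square is `κ`-compact. -/
def KSquareCompact (κ : Cardinal.{u}) : Prop :=
  ∀ (X : Type u) (t : TopologicalSpace X), tweight t ≤ κ → KCompact κ t →
    KCompact κ (@instTopologicalSpaceProd X X t t)

/-!
Let `θ` be least with `λ < λ ^ θ`, so that `λ ^< θ = λ`, and let `L` be the lexicographically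
ordered functions from `θ` into a linear order of size `λ` with an order-reversing involution `σ`.
The eventually constant functions form a dense subset `D` of `L` of size `λ` (this is where
`λ ^< θ = λ` enters), while `#L = λ ^ θ ≥ λ⁺`. A `σ`-invariant `X ⊆ L` of size `λ⁺` containing
`D`, with the Sorgenfrey topology of half-open intervals, has weight at most `λ⁺`, and the
Lindelöf argument for the Sorgenfrey line, with `D` in place of `ℚ`, shows it is `λ⁺`-compact.
In `X × X` however the antidiagonal `{(x, σ x)}` is closed and discrete of size `λ⁺`.
-/

open Cardinal Set Filter Function

theorem tweight_le_mk {X : Type u} {t : TopologicalSpace X} {B : Set (Set X)}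
    (hB : @TopologicalSpace.IsTopologicalBasis X t B) : tweight t ≤ #B :=
  csInf_le (OrderBot.bddBelow _) ⟨B, hB, rfl⟩

abbrev sorgenfrey (α : Type*) [Preorder α] : TopologicalSpace α :=
  .generateFrom (range fun p : α × α => Ico p.1 p.2)

namespace Sorgenfrey

variable {α : Type u} [LinearOrder α]

theorem isTopologicalBasis_Ico [NoMaxOrder α] :
    @TopologicalSpace.IsTopologicalBasis α (sorgenfrey α) (range fun p : α × α => Ico p.1 p.2) := by
  let := sorgenfrey α
  refine ⟨?_, sUnion_eq_univ_iff.2 fun x => ?_, rfl⟩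
  · rintro _ ⟨⟨a, b⟩, rfl⟩ _ ⟨⟨c, d⟩, rfl⟩ x hx
    exact ⟨_, ⟨(max a c, min b d), rfl⟩, by simpa only [Ico_inter_Ico] using hx, Ico_inter_Ico.ge⟩
  · obtain ⟨y, hy⟩ := exists_gt x
    exact ⟨_, ⟨(x, y), rfl⟩, left_mem_Ico.2 hy⟩

theorem isOpen_Ico (a b : α) : @IsOpen α (sorgenfrey α) (Ico a b) :=
  .basic _ ⟨(a, b), rfl⟩

theorem isOpen_Ici [NoMaxOrder α] (a : α) : @IsOpen α (sorgenfrey α) (Ici a) := by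
  let := sorgenfrey α
  exact iUnion_Ico_right a ▸ isOpen_iUnion fun b => isOpen_Ico a b

theorem isOpen_Iio (b : α) : @IsOpen α (sorgenfrey α) (Iio b) := by
  let := sorgenfrey α
  have : ⋃ a, Ico a b = Iio b := iUnion_Ico_eq_Iio_self_iff.2 fun x _ => ⟨x, le_rfl⟩
  exact this ▸ isOpen_iUnion fun a => isOpen_Ico a b

theorem exists_Ico_subset_of_isOpen [NoMaxOrder α] {U : Set α} (hU : (sorgenfrey α).IsOpen U)
    {x : α} (hx : x ∈ U) : ∃ r, x < r ∧ Ico x r ⊆ U := by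
  let := sorgenfrey α
  obtain ⟨_, ⟨⟨a, b⟩, rfl⟩, hxab, hsub⟩ := isTopologicalBasis_Ico.exists_subset_of_mem_open hx hU
  exact ⟨b, hxab.2, (Ico_subset_Ico_left hxab.1).trans hsub⟩

theorem isTopologicalBasis_Ico_of_dense [NoMaxOrder α] {D : Set α}
    (hD : ∀ x y : α, x < y → ∃ d ∈ D, x < d ∧ d ≤ y) :
    @TopologicalSpace.IsTopologicalBasis α (sorgenfrey α) (range fun p : α × D => Ico p.1 p.2) := by
  let := sorgenfrey α
  refine TopologicalSpace.isTopologicalBasis_of_isOpen_of_nhds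
    (by rintro _ ⟨p, rfl⟩; exact isOpen_Ico _ _) fun x U hx hU => ?_
  obtain ⟨r, hxr, hsub⟩ := exists_Ico_subset_of_isOpen hU hx
  obtain ⟨d, hd, hxd, hdr⟩ := hD x r hxr
  exact ⟨_, ⟨(x, ⟨d, hd⟩), rfl⟩, left_mem_Ico.2 hxd, (Ico_subset_Ico_right hdr).trans hsub⟩

theorem tweight_le [NoMaxOrder α] {D : Set α} (hD : ∀ x y : α, x < y → ∃ d ∈ D, x < d ∧ d ≤ y) :
    tweight (sorgenfrey α) ≤ #α * #D :=
  (tweight_le_mk (isTopologicalBasis_Ico_of_dense hD)).trans <| mk_range_le.trans_eq <| by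
    rw [mk_prod, lift_id, lift_id]

theorem mk_setOf_forall_lt_le_le {D : Set α} (hD : ∀ x y : α, x < y → ∃ d ∈ D, x < d ∧ d ≤ y)
    {r : α → α} (hr : ∀ x, x < r x) : #{x | ∀ y < x, r y ≤ x} ≤ #D := by
  choose e he hxe her using fun x => hD x (r x) (hr x)
  refine mk_le_of_injective (f := fun x : {x | ∀ y < x, r y ≤ x} => (⟨e x, he x⟩ : D)) ?_
  rintro ⟨x, hx⟩ ⟨y, hy⟩ hxy
  have hexy : e x = e y := congrArg Subtype.val hxy
  by_contra hne
  rcases lt_or_gt_of_ne fun h : x = y => hne (Subtype.ext h) with h | h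
  · exact (hy x h).not_gt ((hxe y).trans_le (hexy ▸ her x))
  · exact (hx y h).not_gt ((hxe x).trans_le (hexy ▸ her y))

theorem kCompact_succ [NoMaxOrder α] {D : Set α} (hD : ∀ x y : α, x < y → ∃ d ∈ D, x < d ∧ d ≤ y)
    {κ : Cardinal.{u}} (hκ : ℵ₀ ≤ κ) (hDκ : #D ≤ κ) : KCompact (Order.succ κ) (sorgenfrey α) := by
  intro 𝒰 h𝒰 hcov
  have hnhd : ∀ x, ∃ U ∈ 𝒰, ∃ r, x < r ∧ Ico x r ⊆ U := fun x => by
    obtain ⟨U, hU, hxU⟩ := sUnion_eq_univ_iff.1 hcov x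
    exact ⟨U, hU, exists_Ico_subset_of_isOpen (h𝒰 U hU) hxU⟩
  choose U hU r hxr hrU using hnhd
  -- Points not in any open interval `(y, r y)` inject into `D`; the others are covered through
  -- a pair of points of `D` around them.
  set A := {x | ∀ y < x, r y ≤ x}
  set P := {p ∈ D ×ˢ D | ∃ x, x ≤ p.1 ∧ p.2 ≤ r x}
  choose c hc using fun p : P => p.2.2
  refine ⟨U '' A ∪ range (U ∘ c), ?_, ?_, ?_⟩
  · rintro _ (⟨x, -, rfl⟩ | ⟨p, rfl⟩) <;> exact hU _
  · refine (mk_union_le _ _).trans_lt <| lt_of_le_of_lt ?_ (Order.lt_succ κ)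
    calc #(U '' A) + #(range (U ∘ c)) ≤ #A + #(D ×ˢ D) :=
          add_le_add mk_image_le (mk_range_le.trans (mk_le_mk_of_subset (sep_subset _ _)))
      _ ≤ κ + κ * κ := by
          rw [mk_setProd]
          exact add_le_add ((mk_setOf_forall_lt_le_le hD hxr).trans hDκ) (mul_le_mul' hDκ hDκ)
      _ = κ := by rw [mul_eq_self hκ, add_eq_self hκ]
  · refine sUnion_eq_univ_iff.2 fun z => ?_
    by_cases hz : z ∈ A
    · exact ⟨U z, .inl ⟨z, hz, rfl⟩, hrU z (left_mem_Ico.2 (hxr z))⟩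
    · obtain ⟨y, hyz, hzy⟩ : ∃ y < z, z < r y := by simpa [A] using hz
      obtain ⟨d₁, hd₁, hyd₁, hd₁z⟩ := hD y z hyz
      obtain ⟨d₂, hd₂, hzd₂, hd₂r⟩ := hD z (r y) hzy
      have hp : (d₁, d₂) ∈ P := ⟨⟨hd₁, hd₂⟩, y, hyd₁.le, hd₂r⟩
      exact ⟨_, .inr ⟨⟨_, hp⟩, rfl⟩,
        hrU _ ⟨(hc ⟨_, hp⟩).1.trans hd₁z, hzd₂.trans_le (hc ⟨_, hp⟩).2⟩⟩

theorem isOpen_setOf_snd_ne [NoMaxOrder α] {σ : α → α} (hσ : StrictAnti σ) (hσ' : Involutive σ) :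
    @IsOpen (α × α) (@instTopologicalSpaceProd α α (sorgenfrey α) (sorgenfrey α))
      {p | p.2 ≠ σ p.1} := by
  let := sorgenfrey α
  refine isOpen_iff_forall_mem_open.2 fun ⟨u, v⟩ huv => ?_
  change v ≠ σ u at huv
  rcases huv.lt_or_gt with h | h
  · have huσv : u < σ v := hσ' u ▸ hσ h
    by_cases hd : ∃ d, u < d ∧ d < σ v
    · obtain ⟨d, hud, hdv⟩ := hd
      exact ⟨Ico u d ×ˢ Iio (σ d), fun p hp => (hp.2.trans (hσ hp.1.2)).ne,
        (isOpen_Ico u d).prod (isOpen_Iio _), ⟨le_rfl, hud⟩, hσ' v ▸ hσ hdv⟩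
    · -- Now `Ico u (σ v) = {u}`.
      refine ⟨Ico u (σ v) ×ˢ Iio (σ u), fun p hp => ?_, (isOpen_Ico _ _).prod (isOpen_Iio _),
        ⟨le_rfl, huσv⟩, h⟩
      obtain rfl : p.1 = u := hp.1.1.eq_or_lt'.elim id fun hlt => (hd ⟨_, hlt, hp.1.2⟩).elim
      exact hp.2.ne
  · exact ⟨Ici u ×ˢ Ici v, fun p hp => ((hσ.antitone hp.1).trans_lt (h.trans_le hp.2)).ne',
      (isOpen_Ici u).prod (isOpen_Ici v), le_rfl, le_rfl⟩

theorem not_kCompact_prod [NoMaxOrder α] {σ : α → α} (hσ : StrictAnti σ) (hσ' : Involutive σ)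
    {κ : Cardinal.{u}} (hκ : κ ≤ #α) :
    ¬ KCompact κ (@instTopologicalSpaceProd α α (sorgenfrey α) (sorgenfrey α)) := by
  let := sorgenfrey α
  intro h
  -- The antidiagonal `{(x, σ x)}` is closed and discrete: `(x, σ x)` lies in no corner but its own.
  set V : α → Set (α × α) := fun x => Ici x ×ˢ Ici (σ x)
  have hV : ∀ x z, (x, σ x) ∈ V z ↔ z = x := fun x z => by
    simp only [V, mem_prod, mem_Ici, hσ.le_iff_ge, le_antisymm_iff]
  obtain ⟨𝒰₀, hsub, hcard, hcov⟩ := h (insert {p | p.2 ≠ σ p.1} (range V))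
    (by
      rintro _ (rfl | ⟨x, rfl⟩)
      · exact isOpen_setOf_snd_ne hσ hσ'
      · exact (isOpen_Ici x).prod (isOpen_Ici (σ x)))
    (sUnion_eq_univ_iff.2 fun p => by
      by_cases hp : p.2 = σ p.1
      · exact ⟨V p.1, .inr ⟨p.1, rfl⟩, le_rfl, hp.ge⟩
      · exact ⟨_, .inl rfl, hp⟩)
  have hrange : range V ⊆ 𝒰₀ := by
    rintro _ ⟨x, rfl⟩
    obtain ⟨W, hW, hxW⟩ := sUnion_eq_univ_iff.1 hcov (x, σ x)
    rcases hsub hW with rfl | ⟨z, rfl⟩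
    · exact absurd rfl hxW
    · rwa [(hV x z).1 hxW] at hW
  have hVinj : Injective V := fun x z hxz => ((hV x z).1 (hxz ▸ (hV x x).2 rfl)).symm
  exact hcard.not_ge (hκ.trans ((mk_range_eq V hVinj).ge.trans (mk_le_mk_of_subset hrange)))

end Sorgenfrey

theorem not_kSquareCompact_succ_of_dense {L : Type u} [LinearOrder L] [NoMaxOrder L]
    {κ : Cardinal.{u}} (hκ : ℵ₀ ≤ κ) (hL : κ < #L) {D : Set L}
    (hD : ∀ x y : L, x < y → ∃ d ∈ D, x < d ∧ d ≤ y) (hDκ : #D ≤ κ) {σ : L → L}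
    (hσ : StrictAnti σ) (hσ' : Involutive σ) : ¬ KSquareCompact (Order.succ κ) := by
  have hκ' : ℵ₀ ≤ Order.succ κ := hκ.trans (Order.le_succ κ)
  obtain ⟨S, hS⟩ := le_mk_iff_exists_set.1 (Order.succ_le_of_lt hL)
  set X : Set L := (S ∪ D) ∪ σ '' (S ∪ D)
  have hσX : ∀ x ∈ X, σ x ∈ X := by
    rintro x (hx | ⟨y, hy, rfl⟩)
    · exact .inr ⟨x, hx, rfl⟩
    · rw [hσ' y]
      exact .inl hy
  have hDX : D ⊆ X := fun x hx => .inl (.inr hx)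
  have hmkX : #X = Order.succ κ := by
    refine le_antisymm ?_ (hS ▸ mk_le_mk_of_subset fun x hx => .inl (.inl hx))
    have hSD : #(S ∪ D : Set L) ≤ Order.succ κ :=
      (mk_union_le S D).trans (add_le_of_le hκ' hS.le (hDκ.trans (Order.le_succ κ)))
    exact (mk_union_le _ _).trans (add_le_of_le hκ' hSD (mk_image_le.trans hSD))
  let D' : Set X := Subtype.val ⁻¹' D
  have hD' : ∀ x y : X, x < y → ∃ d ∈ D', x < d ∧ d ≤ y := fun x y h =>
    let ⟨d, hd, hxd, hdy⟩ := hD x y h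
    ⟨⟨d, hDX hd⟩, hd, hxd, hdy⟩
  have hD'κ : #D' ≤ κ := (mk_preimage_of_injective _ _ Subtype.val_injective).trans hDκ
  have : NoMaxOrder X := ⟨fun x =>
    let ⟨y, hy⟩ := exists_gt (x : L)
    let ⟨d, hd, hxd, _⟩ := hD _ _ hy
    ⟨⟨d, hDX hd⟩, hxd⟩⟩
  have hweight : tweight (sorgenfrey X) ≤ Order.succ κ :=
    calc tweight (sorgenfrey X) ≤ #X * #D' := Sorgenfrey.tweight_le hD'
      _ ≤ Order.succ κ * Order.succ κ :=
          mul_le_mul' hmkX.le (hD'κ.trans (Order.le_succ κ))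
      _ = Order.succ κ := mul_eq_self hκ'
  intro hsq
  refine Sorgenfrey.not_kCompact_prod (σ := fun x : X => ⟨σ x, hσX x x.2⟩)
    (fun x y hxy => hσ hxy) (fun x => Subtype.ext (hσ' x)) hmkX.ge
    (hsq X (sorgenfrey X) hweight (Sorgenfrey.kCompact_succ hD' hκ hD'κ))

namespace Pi.Lex

variable {ι A : Type u}

theorem exists_eventuallyConst_between [LinearOrder ι] [Preorder A] [NoMaxOrder ι] [NoMaxOrder A]
    {f g : Lex (ι → A)} (h : f < g) :
    ∃ d : Lex (ι → A), EventuallyConst (ofLex d) atTop ∧ f < d ∧ d < g := by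
  classical
  obtain ⟨i, hfg, hi⟩ := h
  obtain ⟨k, hik⟩ := exists_gt i
  obtain ⟨a, ha⟩ := exists_gt (f k)
  have : Nonempty ι := ⟨i⟩
  refine ⟨toLex fun j => if j < k then f j else a,
    eventuallyConst_atTop.2 ⟨k, fun j hj => by simp [hj.not_gt]⟩,
    ⟨k, fun j hj => by simp [hj], by simpa using ha⟩,
    ⟨i, fun j hj => by simp [hj.trans hik, hfg j hj], by simpa [hik] using hi⟩⟩

theorem mk_setOf_eventuallyConst_le [LinearOrder ι] [Nonempty ι] :
    #{f : Lex (ι → A) | EventuallyConst (ofLex f) atTop} ≤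
      (sum fun i : ι => #A ^ #(Iio i)) * #A := by
  classical
  let extend : (Σ i : ι, (Iio i → A)) × A → Lex (ι → A) := fun p =>
    toLex fun j => if h : j < p.1.1 then p.1.2 ⟨j, h⟩ else p.2
  have hsub : {f : Lex (ι → A) | EventuallyConst (ofLex f) atTop} ⊆ range extend := by
    intro f hf
    obtain ⟨i, hi⟩ := eventuallyConst_atTop.1 hf
    refine ⟨(⟨i, fun j => f j⟩, f i), funext fun j => ?_⟩
    by_cases hj : j < i
    · simp [extend, hj]
    · simpa [extend, hj] using (hi j (not_lt.1 hj)).symm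
  refine (mk_le_mk_of_subset hsub).trans (mk_range_le.trans_eq ?_)
  rw [mk_prod, lift_id, lift_id, mk_sigma]
  simp_rw [power_def]

theorem strictAnti_map [LinearOrder ι] [PartialOrder A] {σ : A → A} (hσ : StrictAnti σ) :
    StrictAnti fun f : Lex (ι → A) => toLex (σ ∘ ofLex f) := by
  rintro f g ⟨i, hfg, hi⟩
  exact ⟨i, fun j hj => congrArg σ (hfg j hj).symm, hσ hi⟩

theorem involutive_map {σ : A → A} (hσ : Involutive σ) :
    Involutive fun f : Lex (ι → A) => toLex (σ ∘ ofLex f) :=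
  fun f => funext fun i => hσ (f i)

end Pi.Lex

theorem Sum.Lex.exists_strictAnti_involutive (M : Type*) [LinearOrder M] :
    ∃ σ : Mᵒᵈ ⊕ₗ M → Mᵒᵈ ⊕ₗ M, StrictAnti σ ∧ Involutive σ := by
  refine ⟨fun a => OrderIso.sumLexDualAntidistrib Mᵒᵈ M (OrderDual.toDual a),
    fun _ _ h => (OrderIso.sumLexDualAntidistrib Mᵒᵈ M).strictMono (OrderDual.toDual_lt_toDual.2 h),
    ?_⟩
  rintro (a | a) <;> rfl

noncomputable def minPowExp (κ : Cardinal.{u}) : Cardinal.{u} :=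
  sInf {θ | κ < κ ^ θ}

section minPowExp

variable {κ : Cardinal.{u}}

theorem lt_power_minPowExp (hκ : ℵ₀ ≤ κ) : κ < κ ^ minPowExp κ :=
  csInf_mem (s := {θ | κ < κ ^ θ}) ⟨κ, cantor' κ (one_lt_aleph0.trans_le hκ)⟩

theorem minPowExp_le (hκ : ℵ₀ ≤ κ) : minPowExp κ ≤ κ :=
  csInf_le (OrderBot.bddBelow _) (cantor' κ (one_lt_aleph0.trans_le hκ))

theorem power_le_of_lt_minPowExp {θ : Cardinal.{u}} (hθ : θ < minPowExp κ) : κ ^ θ ≤ κ :=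
  not_lt.1 fun h => notMem_of_lt_csInf' (s := {θ | κ < κ ^ θ}) hθ h

theorem aleph0_le_minPowExp (hκ : ℵ₀ ≤ κ) : ℵ₀ ≤ minPowExp κ :=
  le_csInf ⟨κ, cantor' κ (one_lt_aleph0.trans_le hκ)⟩ fun _ hθ =>
    not_lt.1 fun h => hθ.not_ge (pow_le hκ h)

theorem powerlt_minPowExp (hκ : ℵ₀ ≤ κ) : κ ^< minPowExp κ = κ := by
  refine le_antisymm (powerlt_le.2 fun _ => power_le_of_lt_minPowExp) ?_
  simpa using le_powerlt κ (one_lt_aleph0.trans_le (aleph0_le_minPowExp hκ))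

end minPowExp

theorem not_kSquareCompact_succ_of_lt_power {ι M : Type u} [LinearOrder ι] [WellFoundedLT ι]
    [NoMaxOrder ι] [Nonempty ι] [LinearOrder M] [NoMaxOrder M] [Nonempty M] {κ : Cardinal.{u}}
    (hκ : ℵ₀ ≤ κ) (hM : #M = κ) (hι : #ι ≤ κ) (hlt : κ < κ ^ #ι)
    (hIio : ∀ i : ι, κ ^ #(Iio i) ≤ κ) : ¬ KSquareCompact (Order.succ κ) := by
  have hA : #(Mᵒᵈ ⊕ₗ M) = κ := by
    rw [← toLex.cardinal_eq, mk_sum, lift_id, lift_id, ← OrderDual.toDual.cardinal_eq, hM,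
      add_eq_self hκ]
  obtain ⟨σ, hσ, hσ'⟩ := Sum.Lex.exists_strictAnti_involutive M
  -- Instance search does not reach `NoMaxOrder` through the linear order of `Lex`, so it is
  -- passed by hand.
  have : NoMaxOrder (Lex (ι → Mᵒᵈ ⊕ₗ M)) := inferInstance
  refine @not_kSquareCompact_succ_of_dense (Lex (ι → Mᵒᵈ ⊕ₗ M)) _ this _ hκ ?_
    {f | EventuallyConst (ofLex f) atTop} (fun x y h => ?_) ?_ _ (Pi.Lex.strictAnti_map hσ)
    (Pi.Lex.involutive_map hσ')
  · rwa [← toLex.cardinal_eq, ← power_def, hA]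
  · obtain ⟨d, hd, hxd, hdy⟩ := Pi.Lex.exists_eventuallyConst_between h
    exact ⟨d, hd, hxd, hdy.le⟩
  · refine Pi.Lex.mk_setOf_eventuallyConst_le.trans ?_
    calc (sum fun i : ι => #(Mᵒᵈ ⊕ₗ M) ^ #(Iio i)) * #(Mᵒᵈ ⊕ₗ M)
        ≤ (sum fun _ : ι => κ) * κ := by
          rw [hA]
          exact mul_le_mul' (sum_le_sum _ _ hIio) le_rfl
      _ ≤ κ * κ * κ := sum_const' ι κ ▸ mul_le_mul' (mul_le_mul' hι le_rfl) le_rfl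
      _ = κ := by rw [mul_eq_self hκ, mul_eq_self hκ]

theorem stmt_6 (l : Cardinal.{u}) (hl : Cardinal.aleph0 ≤ l) :
    (∃ μ θ : Cardinal.{u}, Cardinal.aleph0 ≤ μ ∧ Cardinal.aleph0 ≤ θ ∧
      μ ^< θ = μ ∧ μ < Order.succ l ∧ Order.succ l ≤ μ ^ θ) ∧
    ¬ KSquareCompact (Order.succ l) := by
  have hθ := aleph0_le_minPowExp hl
  refine ⟨⟨l, minPowExp l, hl, hθ, powerlt_minPowExp hl, Order.lt_succ l,
    Order.succ_le_of_lt (lt_power_minPowExp hl)⟩, ?_⟩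
  have := Cardinal.noMaxOrder hl
  have := Cardinal.noMaxOrder hθ
  have := nonempty_ord_toType (aleph0_pos.trans_le hl).ne'
  have := nonempty_ord_toType (aleph0_pos.trans_le hθ).ne'
  refine not_kSquareCompact_succ_of_lt_power (ι := (minPowExp l).ord.ToType)
    (M := l.ord.ToType) hl (mk_ord_toType l) ((mk_ord_toType _).trans_le (minPowExp_le hl))
    ((mk_ord_toType _).symm ▸ lt_power_minPowExp hl) fun i => power_le_of_lt_minPowExp ?_
  simpa using mk_Iio_lt i
end

section
/- Let T be a κ-Aronszajn tree with the fine wedge topology. Then every cover of T by subbasic open sets (sets of the form ↑t or (↑t)^c) has a subcover of cardinality less than κ. -/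
/-!
Let `B` be the set of nodes `b` whose co-cone `(↑b)ᶜ` belongs to the cover. If two nodes of `B` are
incomparable, their co-cones already cover the tree, because the predecessors of any node form a
chain. If `B` is a chain of unbounded height, its extension to a maximal chain is a cofinal branch,
which an Aronszajn tree does not have. Otherwise the heights in `B` are bounded by some `o < κ`:
every node outside the co-cones of `B` lies above an upper bound of `B` of height at most `o`, and
the cover element containing that upper bound must be a cone, which then contains the node. There
are fewer than `κ` nodes of height at most `o`, by regularity of `κ`.
-/

universe u

/-- A partial order is a tree if the set of strict predecessors of every point
is well-ordered by `<`. -/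
def IsTree (T : Type u) [PartialOrder T] : Prop :=
  ∀ x : T, IsWellOrder {y : T // y < x} (fun a b => (a : T) < (b : T))

/-- The height of a node of a tree: the order type of its set of strict predecessors. -/
noncomputable def nodeHeight {T : Type u} [PartialOrder T] (hT : IsTree T) (x : T) :
    Ordinal.{u} :=
  letI := hT x
  Ordinal.type (fun a b : {y : T // y < x} => (a : T) < (b : T))

/-- A `κ`-tree: a tree of height `κ` all of whose levels have size `< κ`. -/
def IsKTree {T : Type u} [PartialOrder T] (hT : IsTree T) (κ : Cardinal.{u}) : Prop :=
  (∀ x : T, nodeHeight hT x < κ.ord) ∧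
  (∀ o : Ordinal.{u}, o < κ.ord → ∃ x : T, nodeHeight hT x = o) ∧
  (∀ o : Ordinal.{u}, Cardinal.mk {x : T | nodeHeight hT x = o} < κ)

/-- The fine wedge topology on a tree: generated by the cones `↑t = Set.Ici t`
and their complements. -/
def fineWedge (T : Type u) [PartialOrder T] : TopologicalSpace T :=
  TopologicalSpace.generateFrom
    ({s | ∃ t : T, s = Set.Ici t} ∪ {s | ∃ t : T, s = (Set.Ici t)ᶜ})

section Tree

open Cardinal Set

variable {T : Type u} [PartialOrder T]

theorem IsTree.le_or_le_of_le (hT : IsTree T) {x y z : T} (hy : y ≤ x) (hz : z ≤ x) :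
    y ≤ z ∨ z ≤ y := by
  rcases hy.lt_or_eq with hy | rfl
  · rcases hz.lt_or_eq with hz | rfl
    · have := hT x
      rcases trichotomous_of (fun a b : {y : T // y < x} => (a : T) < (b : T)) ⟨y, hy⟩ ⟨z, hz⟩
        with h | h | h
      · exact Or.inl h.le
      · exact Or.inl (congrArg Subtype.val h).le
      · exact Or.inr h.le
    · exact Or.inl hy.le
  · exact Or.inr hz

theorem IsTree.compl_Ici_union_compl_Ici (hT : IsTree T) {a b : T} (hab : ¬(a ≤ b ∨ b ≤ a)) :
    (Ici a)ᶜ ∪ (Ici b)ᶜ = Set.univ := by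
  refine eq_univ_of_forall fun x => ?_
  by_contra h
  simp only [mem_union, mem_compl_iff, mem_Ici, not_or, not_not] at h
  exact hab (hT.le_or_le_of_le h.1 h.2)

theorem IsTree.mem_of_le_of_isMaxChain (hT : IsTree T) {c : Set T} (hc : IsMaxChain (· ≤ ·) c)
    {x y : T} (hx : x ∈ c) (hyx : y ≤ x) : y ∈ c := by
  have hins : IsChain (· ≤ ·) (insert y c) := hc.1.insert fun z hz _ => by
    rcases hc.1.total hx hz with hxz | hzx
    · exact Or.inl (hyx.trans hxz)
    · exact hT.le_or_le_of_le hyx hzx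
  exact hc.2 hins (subset_insert y c) ▸ mem_insert y c

theorem nodeHeight_eq_typein (hT : IsTree T) {x y : T} (h : y < x) :
    letI := hT x
    nodeHeight hT y = Ordinal.typein (fun a b : {y : T // y < x} => (a : T) < (b : T)) ⟨y, h⟩ := by
  have := hT x
  have := hT y
  rw [← Ordinal.type_subrel]
  exact Ordinal.type_eq.2 ⟨RelIso.mk
    (Equiv.mk (fun z => ⟨⟨z.1, z.2.trans h⟩, z.2⟩) (fun b => ⟨b.1.1, b.2⟩)
      (fun _ => rfl) (fun _ => rfl)) Iff.rfl⟩

theorem nodeHeight_lt_nodeHeight (hT : IsTree T) {x y : T} (h : y < x) :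
    nodeHeight hT y < nodeHeight hT x := by
  have := hT x
  rw [nodeHeight_eq_typein hT h]
  exact Ordinal.typein_lt_type _ _

theorem nodeHeight_le_nodeHeight (hT : IsTree T) {x y : T} (h : y ≤ x) :
    nodeHeight hT y ≤ nodeHeight hT x := by
  rcases h.lt_or_eq with h | rfl
  exacts [(nodeHeight_lt_nodeHeight hT h).le, le_rfl]

theorem exists_le_nodeHeight_eq (hT : IsTree T) {x : T} {o : Ordinal.{u}}
    (ho : o ≤ nodeHeight hT x) : ∃ y ≤ x, nodeHeight hT y = o := by
  rcases ho.lt_or_eq with ho | rfl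
  · have := hT x
    obtain ⟨a, ha⟩ := Ordinal.typein_surj (fun a b : {y : T // y < x} => (a : T) < (b : T)) ho
    exact ⟨a.1, a.2.le, by rw [nodeHeight_eq_typein hT a.2, ha]⟩
  · exact ⟨x, le_rfl, rfl⟩

theorem mk_setOf_nodeHeight_lt_lt (hT : IsTree T) {κ : Cardinal.{u}} (hreg : κ.IsRegular)
    (hlev : ∀ o, #{x : T | nodeHeight hT x = o} < κ) {o : Ordinal.{u}} (ho : o < κ.ord) :
    #{x : T | nodeHeight hT x < o} < κ := by
  have hunion : {x : T | nodeHeight hT x < o} =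
      ⋃ i : o.ToType, {x | nodeHeight hT x = (Ordinal.ToType.mk.symm i : Ordinal)} := by
    ext x
    simp only [mem_iUnion]
    exact ⟨fun h => ⟨Ordinal.ToType.mk ⟨nodeHeight hT x, h⟩, by simp⟩,
      fun ⟨i, hi⟩ => lt_of_eq_of_lt hi (Ordinal.ToType.mk.symm i).2⟩
  rw [hunion, card_iUnion_lt_iff_forall_of_isRegular hreg (by rwa [mk_toType, ← lt_ord])]
  exact fun _ => hlev _

theorem exists_isMaxChain_forall_nodeHeight (hT : IsTree T) {B : Set T}
    (hB : IsChain (· ≤ ·) B) {α : Ordinal.{u}} (hunb : ∀ o < α, ∃ b ∈ B, o ≤ nodeHeight hT b) :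
    ∃ c, IsMaxChain (· ≤ ·) c ∧ ∀ o < α, ∃ x ∈ c, nodeHeight hT x = o := by
  obtain ⟨c, hc, hBc⟩ := hB.exists_maxChain
  refine ⟨c, hc, fun o ho => ?_⟩
  obtain ⟨b, hb, hob⟩ := hunb o ho
  obtain ⟨y, hyb, hy⟩ := exists_le_nodeHeight_eq hT hob
  exact ⟨y, hT.mem_of_le_of_isMaxChain hc (hBc hb) hyb, hy⟩

theorem exists_mem_upperBounds_le_nodeHeight_le (hT : IsTree T) {B : Set T} {o : Ordinal.{u}}
    (hB : ∀ b ∈ B, nodeHeight hT b < o) {x : T} (hx : x ∈ upperBounds B) :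
    ∃ m ∈ upperBounds B, m ≤ x ∧ nodeHeight hT m ≤ o := by
  rcases le_total o (nodeHeight hT x) with hox | hxo
  · obtain ⟨m, hmx, rfl⟩ := exists_le_nodeHeight_eq hT hox
    refine ⟨m, fun b hb => ?_, hmx, le_rfl⟩
    exact (hT.le_or_le_of_le (hx hb) hmx).resolve_right
      fun hmb => (hB b hb).not_ge (nodeHeight_le_nodeHeight hT hmb)
  · exact ⟨x, hx, le_rfl, hxo⟩

theorem exists_subcover_of_nodeHeight_lt (hT : IsTree T) {κ : Cardinal.{u}} (hreg : κ.IsRegular)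
    (hlev : ∀ o, #{x : T | nodeHeight hT x = o} < κ) {𝒰 : Set (Set T)}
    (h𝒰 : ∀ U ∈ 𝒰, (∃ t, U = Ici t) ∨ ∃ t, U = (Ici t)ᶜ) (hcov : ⋃₀ 𝒰 = Set.univ)
    {o : Ordinal.{u}} (ho : o < κ.ord) (hB : ∀ b, (Ici b)ᶜ ∈ 𝒰 → nodeHeight hT b < o) :
    ∃ 𝒰₀ ⊆ 𝒰, #𝒰₀ < κ ∧ ⋃₀ 𝒰₀ = Set.univ := by
  choose V hV𝒰 hmemV using fun x => mem_sUnion.1 (hcov ▸ mem_univ x : x ∈ ⋃₀ 𝒰)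
  set B := {b | (Ici b)ᶜ ∈ 𝒰}
  refine ⟨(fun b => (Ici b)ᶜ) '' B ∪ V '' {m | nodeHeight hT m < Order.succ o}, ?_, ?_, ?_⟩
  · rintro W (⟨b, hb, rfl⟩ | ⟨m, -, rfl⟩)
    exacts [hb, hV𝒰 m]
  · have hsmall := mk_setOf_nodeHeight_lt_lt hT hreg hlev
      ((isSuccLimit_ord hreg.aleph0_le).succ_lt ho)
    refine (mk_union_le _ _).trans_lt (add_lt_of_lt hreg.aleph0_le ?_ (mk_image_le.trans_lt hsmall))
    exact mk_image_le.trans_lt <|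
      (mk_le_mk_of_subset fun b hb => (hB b hb).trans (Order.lt_succ o)).trans_lt hsmall
  · refine eq_univ_of_forall fun x => ?_
    by_cases hx : x ∈ upperBounds B
    · obtain ⟨m, hm, hmx, hmo⟩ := exists_mem_upperBounds_le_nodeHeight_le hT hB hx
      refine ⟨V m, Or.inr ⟨m, Order.lt_succ_iff.2 hmo, rfl⟩, ?_⟩
      -- `m` bounds `B`, so the cover element containing `m` cannot be a co-cone of `B`.
      have hmV := hmemV m
      rcases h𝒰 _ (hV𝒰 m) with ⟨a, ha⟩ | ⟨b, hb⟩
      · rw [ha] at hmV ⊢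
        exact hmV.trans hmx
      · rw [hb] at hmV
        exact absurd (hm (show (Ici b)ᶜ ∈ 𝒰 from hb ▸ hV𝒰 m)) hmV
    · simp only [mem_upperBounds, not_forall] at hx
      obtain ⟨b, hb, hbx⟩ := hx
      exact ⟨_, Or.inl ⟨b, hb, rfl⟩, hbx⟩

end Tree

theorem stmt_16_general (κ : Cardinal.{u}) (hreg : κ.IsRegular)
    (T : Type u) [PartialOrder T] (hT : IsTree T) (hK : IsKTree hT κ)
    -- `T` is Aronszajn: no cofinal branch
    (hA : ¬ ∃ b : Set T, IsChain (· ≤ ·) b ∧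
        (∀ c : Set T, IsChain (· ≤ ·) c → b ⊆ c → b = c) ∧
        (∀ o : Ordinal.{u}, o < κ.ord → ∃ x ∈ b, nodeHeight hT x = o)) :
    -- every cover by subbasic open sets has a subcover of size < κ
    ∀ 𝒰 : Set (Set T),
      (∀ U ∈ 𝒰, (∃ t : T, U = Set.Ici t) ∨ (∃ t : T, U = (Set.Ici t)ᶜ)) →
      ⋃₀ 𝒰 = Set.univ →
      ∃ 𝒰₀ ⊆ 𝒰, Cardinal.mk 𝒰₀ < κ ∧ ⋃₀ 𝒰₀ = Set.univ := by
  intro 𝒰 h𝒰 hcov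
  by_cases hbdd : ∃ o < κ.ord, ∀ b, (Set.Ici b)ᶜ ∈ 𝒰 → nodeHeight hT b < o
  · obtain ⟨o, ho, hB⟩ := hbdd
    exact exists_subcover_of_nodeHeight_lt hT hreg hK.2.2 h𝒰 hcov ho hB
  push Not at hbdd
  by_cases hchain : IsChain (· ≤ ·) {b | (Set.Ici b)ᶜ ∈ 𝒰}
  · obtain ⟨c, hc, hcof⟩ := exists_isMaxChain_forall_nodeHeight hT hchain hbdd
    exact absurd ⟨c, hc.1, fun d hd hcd => hc.2 hd hcd, hcof⟩ hA
  · obtain ⟨a, ha, b, hb, -, hab⟩ : ∃ a, (Set.Ici a)ᶜ ∈ 𝒰 ∧ ∃ b, (Set.Ici b)ᶜ ∈ 𝒰 ∧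
        a ≠ b ∧ ¬(a ≤ b ∨ b ≤ a) := by
      simpa [IsChain, Set.Pairwise] using hchain
    refine ⟨{(Set.Ici a)ᶜ, (Set.Ici b)ᶜ}, Set.pair_subset ha hb, ?_, ?_⟩
    · exact ((Set.finite_singleton _).insert _).lt_aleph0.trans_le hreg.aleph0_le
    · rw [Set.sUnion_pair, hT.compl_Ici_union_compl_Ici hab]

theorem stmt_16 (κ : Cardinal.{u}) (hκ : Cardinal.aleph0 < κ) (hreg : κ.IsRegular)
    (T : Type u) [PartialOrder T] (hT : IsTree T) (hK : IsKTree hT κ)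
    -- `T` is Aronszajn: no cofinal branch
    (hA : ¬ ∃ b : Set T, IsChain (· ≤ ·) b ∧
        (∀ c : Set T, IsChain (· ≤ ·) c → b ⊆ c → b = c) ∧
        (∀ o : Ordinal.{u}, o < κ.ord → ∃ x ∈ b, nodeHeight hT x = o)) :
    -- every cover by subbasic open sets has a subcover of size < κ
    ∀ 𝒰 : Set (Set T),
      (∀ U ∈ 𝒰, (∃ t : T, U = Set.Ici t) ∨ (∃ t : T, U = (Set.Ici t)ᶜ)) →
      ⋃₀ 𝒰 = Set.univ →
      ∃ 𝒰₀ ⊆ 𝒰, Cardinal.mk 𝒰₀ < κ ∧ ⋃₀ 𝒰₀ = Set.univ :=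
  stmt_16_general κ hreg T hT hK hA
end
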